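/- arXiv:1009.3323 — 4 statements merged into one kernel-verified Lean document; each statement's English description precedes it below -/
import Mathlib

section
/- Let m, s be nonzero complex numbers and r a complex number. With A = !![m, 1; 0, m⁻¹] and B = !![s, 0; r, s⁻¹] in SL₂(ℂ) and W = B·A·B⁻¹·A⁻¹·B⁻¹·A·B, the matrices W and A commute (W·A = A·W) if and only if q(m,s,r) = 0 or (r = 0 and (s = 1 or s = −1)), where q(m,s,r) = r − m²r + ms − m³s + 2mr²s − m³r²s − rs² + 4m²rs² − m⁴rs² + m²r³s² − ms³ + m³s³ − mr²s³ + 2m³r²s³ − m²rs⁴ + m⁴rs⁴. -/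
/-!
Multiplying out the eight 2 × 2 matrices gives
`W * A - A * W = q(m,s,r) / (m³ s³) • !![m r s, m (1 - s²); r (1 - m²) s, -m r s]`.
As `m ≠ 0`, the second factor vanishes exactly when `r = 0` and `s² = 1`: the abelian component.
-/

/-- The common factor `p` (up to a unit) of the defining equations of the
representation variety of the Whitehead link group. -/
noncomputable def q (m s r : ℂ) : ℂ :=
  r - m^2*r + m*s - m^3*s + 2*m*r^2*s - m^3*r^2*s - r*s^2 + 4*m^2*r*s^2
    - m^4*r*s^2 + m^2*r^3*s^2 - m*s^3 + m^3*s^3 - m*r^2*s^3 + 2*m^3*r^2*s^3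
    - m^2*r*s^4 + m^4*r*s^4

open Matrix

theorem Matrix.inv_fin_two_of_det_eq_one {R : Type*} [CommRing R] {a b c d : R}
    (h : a * d - b * c = 1) : !![a, b; c, d]⁻¹ = !![d, -b; -c, a] := by
  rw [inv_def, det_fin_two_of, h, Ring.inverse_one, one_smul, adjugate_fin_two_of]

def whiteheadCofactor {K : Type*} [Field K] (m s r : K) : Matrix (Fin 2) (Fin 2) K :=
  !![m * r * s, m * (1 - s ^ 2); r * (1 - m ^ 2) * s, -(m * r * s)]

theorem whiteheadCofactor_eq_zero_iff {K : Type*} [Field K] {m s r : K} (hm : m ≠ 0) :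
    whiteheadCofactor m s r = 0 ↔ r = 0 ∧ (s = 1 ∨ s = -1) := by
  rw [← sq_eq_one_iff, whiteheadCofactor]
  simp only [← Matrix.ext_iff, Fin.forall_fin_two]
  constructor
  · rintro ⟨⟨hrs, hs2⟩, -⟩
    have hs2 : 1 = s ^ 2 := by simpa [hm, sub_eq_zero] using hs2
    have hs : s ≠ 0 := by rintro rfl; simp at hs2
    exact ⟨by simpa [hm, hs] using hrs, hs2.symm⟩
  · rintro ⟨rfl, hs2⟩
    simp [hs2]

theorem whitehead_relator_defect {m s r : ℂ} (hm : m ≠ 0) (hs : s ≠ 0)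
    {A B : Matrix (Fin 2) (Fin 2) ℂ} (hA : A = !![m, 1; 0, m⁻¹]) (hB : B = !![s, 0; r, s⁻¹]) :
    (B * A * B⁻¹ * A⁻¹ * B⁻¹ * A * B) * A - A * (B * A * B⁻¹ * A⁻¹ * B⁻¹ * A * B) =
      (q m s r / (m ^ 3 * s ^ 3)) • whiteheadCofactor m s r := by
  have hA_inv : A⁻¹ = !![m⁻¹, -1; 0, m] := by
    simpa [hA] using inv_fin_two_of_det_eq_one (by field_simp; ring : m * m⁻¹ - 1 * 0 = 1)
  have hB_inv : B⁻¹ = !![s⁻¹, 0; -r, s] := by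
    simpa [hB] using inv_fin_two_of_det_eq_one (by field_simp; ring : s * s⁻¹ - 0 * r = 1)
  rw [hA_inv, hB_inv, hA, hB]
  simp only [mul_fin_two]
  ext i j
  fin_cases i <;> fin_cases j <;> simp [q, whiteheadCofactor] <;> field_simp <;> ring

theorem whitehead_rep_variety_decomposition (m s r : ℂ) (hm : m ≠ 0) (hs : s ≠ 0)
    (A B W : Matrix (Fin 2) (Fin 2) ℂ)
    (hA : A = !![m, 1; 0, m⁻¹]) (hB : B = !![s, 0; r, s⁻¹])
    (hW : W = B * A * B⁻¹ * A⁻¹ * B⁻¹ * A * B) :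
    W * A = A * W ↔ q m s r = 0 ∨ (r = 0 ∧ (s = 1 ∨ s = -1)) := by
  rw [← sub_eq_zero, hW, whitehead_relator_defect hm hs hA hB, smul_eq_zero, div_eq_zero_iff,
    whiteheadCofactor_eq_zero_iff hm]
  simp [hm, hs]
end

section
/- Let m, s be nonzero complex numbers and r a complex number such that q(m,s,r) = 0, where q(m,s,r) = r − m²r + ms − m³s + 2mr²s − m³r²s − rs² + 4m²rs² − m⁴rs² + m²r³s² − ms³ + m³s³ − mr²s³ + 2m³r²s³ − m²rs⁴ + m⁴rs⁴. Then f̃(x, y, z) = 0, where x = m + m⁻¹, y = s + s⁻¹, z = ms + m⁻¹s⁻¹ + r, and f̃(x,y,z) = −xy − 2z + x²z + y²z − xyz² + z³. -/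
/-- The defining polynomial of the affine canonical component of the
character variety of the Whitehead link complement. -/
def whiteheadF (x y z : ℂ) : ℂ := -x*y - 2*z + x^2*z + y^2*z - x*y*z^2 + z^3

theorem trace_coords_satisfy_canonical_polynomial (m s r : ℂ)
    (hm : m ≠ 0) (hs : s ≠ 0) (hq : q m s r = 0)
    (x y z : ℂ) (hx : x = m + m⁻¹) (hy : y = s + s⁻¹)
    (hz : z = m*s + m⁻¹*s⁻¹ + r) :
    whiteheadF x y z = 0 := by
  have hu : m * m⁻¹ = 1 := mul_inv_cancel₀ hm
  have hv : s * s⁻¹ = 1 := mul_inv_cancel₀ hs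
  subst hx hy hz
  simp only [q] at hq
  simp only [whiteheadF]
  linear_combination (m*s*m⁻¹^3*s⁻¹^3) * hq + (((2:ℂ))*r + ((-2:ℂ))*s⁻¹^2*r + ((2:ℂ))*s*s⁻¹*r + ((1:ℂ))*s*s⁻¹^3*r + ((-2:ℂ))*s^2*r + ((-4:ℂ))*s^3*s⁻¹^3*r + ((-1:ℂ))*s^3*s⁻¹^3*r^3 + ((1:ℂ))*s^5*s⁻¹^3*r + ((2:ℂ))*m⁻¹*s⁻¹ + ((-1:ℂ))*m⁻¹*s⁻¹^3 + ((1:ℂ))*m⁻¹*s + ((-2:ℂ))*m⁻¹*s^2*s⁻¹ + ((-1:ℂ))*m⁻¹*s^2*s⁻¹^3 + ((-2:ℂ))*m⁻¹*s^2*s⁻¹^3*r^2 + ((1:ℂ))*m⁻¹*s^4*s⁻¹^3 + ((1:ℂ))*m⁻¹*s^4*s⁻¹^3*r^2 + ((-1:ℂ))*m⁻¹^2*s*s⁻¹^3*r + ((1:ℂ))*m⁻¹^2*s^3*s⁻¹^3*r + ((1:ℂ))*m*s⁻¹ + ((2:ℂ))*m*s + ((-2:ℂ))*m*s*s⁻¹^2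 + ((1:ℂ))*m*s^2*s⁻¹^3 + ((1:ℂ))*m*s^2*s⁻¹^3*r^2 + ((-1:ℂ))*m*s^3 + ((-1:ℂ))*m*s^4*s⁻¹^3 + ((-2:ℂ))*m*s^4*s⁻¹^3*r^2 + ((1:ℂ))*m*m⁻¹*s*s⁻¹^3*r + ((-4:ℂ))*m*m⁻¹*s^3*s⁻¹^3*r + ((-1:ℂ))*m*m⁻¹*s^3*s⁻¹^3*r^3 + ((1:ℂ))*m*m⁻¹*s^5*s⁻¹^3*r + ((-1:ℂ))*m*m⁻¹^2*s^2*s⁻¹^3 + ((-2:ℂ))*m*m⁻¹^2*s^2*s⁻¹^3*r^2 + ((1:ℂ))*m*m⁻¹^2*s^4*s⁻¹^3 + ((1:ℂ))*m*m⁻¹^2*s^4*s⁻¹^3*r^2 + ((1:ℂ))*m^2*s^3*s⁻¹^3*r + ((-1:ℂ))*m^2*s^5*s⁻¹^3*r + ((1:ℂ))*m^2*m⁻¹*s^2*s⁻¹^3 + ((1:ℂ))*m^2*m⁻¹*s^2*s⁻¹^3*r^2 + ((-1:ℂ))*m^2*m⁻¹*s^4*s⁻¹^3 + ((-2:ℂ))*m^2*m⁻¹*s^4*s⁻¹^3*r^2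 + ((1:ℂ))*m^2*m⁻¹^2*s*s⁻¹^3*r + ((-4:ℂ))*m^2*m⁻¹^2*s^3*s⁻¹^3*r + ((-1:ℂ))*m^2*m⁻¹^2*s^3*s⁻¹^3*r^3 + ((1:ℂ))*m^2*m⁻¹^2*s^5*s⁻¹^3*r + ((1:ℂ))*m^3*m⁻¹*s^3*s⁻¹^3*r + ((-1:ℂ))*m^3*m⁻¹*s^5*s⁻¹^3*r + ((1:ℂ))*m^3*m⁻¹^2*s^2*s⁻¹^3 + ((1:ℂ))*m^3*m⁻¹^2*s^2*s⁻¹^3*r^2 + ((-1:ℂ))*m^3*m⁻¹^2*s^4*s⁻¹^3 + ((-2:ℂ))*m^3*m⁻¹^2*s^4*s⁻¹^3*r^2 + ((1:ℂ))*m^4*m⁻¹^2*s^3*s⁻¹^3*r + ((-1:ℂ))*m^4*m⁻¹^2*s^5*s⁻¹^3*r) * hu + (((-1:ℂ))*r^3 + ((1:ℂ))*s⁻¹^2*r + ((-4:ℂ))*s*s⁻¹*r + ((-1:ℂ))*s*s⁻¹*r^3 + ((1:ℂ))*s^2*r + ((-4:ℂ))*s^2*s⁻¹^2*r + ((-1:ℂ))*s^2*s⁻¹^2*r^3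 + ((1:ℂ))*s^3*s⁻¹*r + ((1:ℂ))*s^4*s⁻¹^2*r + ((1:ℂ))*m⁻¹*s⁻¹ + ((-2:ℂ))*m⁻¹*s⁻¹*r^2 + ((1:ℂ))*m⁻¹*s*r^2 + ((-1:ℂ))*m⁻¹*s*s⁻¹^2 + ((-2:ℂ))*m⁻¹*s*s⁻¹^2*r^2 + ((1:ℂ))*m⁻¹*s^2*s⁻¹ + ((1:ℂ))*m⁻¹*s^2*s⁻¹*r^2 + ((1:ℂ))*m⁻¹*s^3*s⁻¹^2 + ((1:ℂ))*m⁻¹*s^3*s⁻¹^2*r^2 + ((-1:ℂ))*m⁻¹^2*r + ((-1:ℂ))*m⁻¹^2*s⁻¹^2*r + ((1:ℂ))*m⁻¹^2*s*s⁻¹*r + ((1:ℂ))*m⁻¹^2*s^2*s⁻¹^2*r + ((-1:ℂ))*m⁻¹^3*s⁻¹ + ((1:ℂ))*m*s⁻¹*r^2 + ((1:ℂ))*m*s + ((-2:ℂ))*m*s*r^2 + ((1:ℂ))*m*s*s⁻¹^2 + ((1:ℂ))*m*s*s⁻¹^2*r^2 + ((-1:ℂ))*m*s^2*s⁻¹ +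 ((-2:ℂ))*m*s^2*s⁻¹*r^2 + ((-1:ℂ))*m*s^3*s⁻¹^2 + ((-2:ℂ))*m*s^3*s⁻¹^2*r^2 + ((-1:ℂ))*m^2*r + ((1:ℂ))*m^2*s*s⁻¹*r + ((-1:ℂ))*m^2*s^2*r + ((1:ℂ))*m^2*s^2*s⁻¹^2*r + ((-1:ℂ))*m^2*s^3*s⁻¹*r + ((-1:ℂ))*m^2*s^4*s⁻¹^2*r + ((-1:ℂ))*m^3*s) * hv
end

section
/- Let x, y, z be complex numbers with f̃(x,y,z) = 0, where f̃(x,y,z) = −xy − 2z + x²z + y²z − xyz² + z³. Then there exist complex numbers m, s, r with m ≠ 0 and s ≠ 0 such that q(m,s,r) = 0, x = m + m⁻¹, y = s + s⁻¹, and z = ms + m⁻¹s⁻¹ + r, where q(m,s,r) = r − m²r + ms − m³s + 2mr²s − m³r²s − rs² + 4m²rs² − m⁴rs² + m²r³s² − ms³ + m³s³ − mr²s³ + 2m³r²s³ − m²rs⁴ + m⁴rs⁴. -/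
/-- Any complex number is a trace `m + m⁻¹` for some nonzero `m`. -/
lemma exists_trace_lift (x : ℂ) : ∃ m : ℂ, m ≠ 0 ∧ x = m + m⁻¹ := by
  obtain ⟨w, hw⟩ := IsAlgClosed.exists_pow_nat_eq (x^2 - 4) two_pos
  have hmm : ((x + w)/2) * ((x - w)/2) = 1 := by
    linear_combination (-1/4 : ℂ) * hw
  have hm : (x + w)/2 ≠ 0 := by
    intro h; rw [h, zero_mul] at hmm; exact zero_ne_one hmm
  have hinv : ((x + w)/2)⁻¹ = (x - w)/2 := inv_eq_of_mul_eq_one_right hmm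
  exact ⟨(x + w)/2, hm, by rw [hinv]; ring⟩

/-- The key polynomial identity: substituting the trace coordinates into `q`
gives `m²s²` times `whiteheadF`. -/
lemma q_eq_unit_mul_whiteheadF (m s z : ℂ) (hm : m ≠ 0) (hs : s ≠ 0) :
    q m s (z - m*s - m⁻¹*s⁻¹)
      = m^2 * s^2 * whiteheadF (m + m⁻¹) (s + s⁻¹) z := by
  have hm1 : m * m⁻¹ = 1 := mul_inv_cancel₀ hm
  have hs1 : s * s⁻¹ = 1 := mul_inv_cancel₀ hs
  set u := m⁻¹ with hu
  set v := s⁻¹ with hv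
  unfold q whiteheadF
  linear_combination
    ((-4)*s*v*z + (-1)*s^2*z + 3*s^2*v^2*z + 2*s^3*v*z + 2*u*s*v^2
      + (-1)*u*s^2*v^3 + (-1)*u*s^3*v^2 + m*v + (-1)*m*s*v^2 + m*s^2*v
      + (-2)*m*s^2*v*z^2 + m*s^3 + m*s^3*z^2 + (-1)*m*s^3*v^2 + (-1)*m*s^4*v
      + (-1)*m*u*s^2*z + 3*m*u*s^2*v^2*z + (-1)*m*u^2*s^2*v^3 + 2*m^2*s*v*z
      + (-2)*m^2*s^2*z + 2*m^2*s^3*v*z + (-1)*m^2*u*s*v^2 + (-1)*m^2*u*s^3*v^2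
      + (-1)*m^3*s^2*v) * hm1
    + ((-1)*z + 3*s*v*z + 2*s^2*z + u*v + (-1)*u*s*v^2 + (-1)*u*s^2*v
      + (-1)*m*v + (-2)*m*s*z^2 + (-1)*m*s^2*v + (-1)*m*s^3 + m^2*z
      + (-1)*m^2*s*v*z + m^3*s*z^2) * hs1

theorem canonical_polynomial_zero_lifts_to_rep (x y z : ℂ)
    (hf : whiteheadF x y z = 0) :
    ∃ m s r : ℂ, m ≠ 0 ∧ s ≠ 0 ∧ q m s r = 0 ∧
      x = m + m⁻¹ ∧ y = s + s⁻¹ ∧ z = m*s + m⁻¹*s⁻¹ + r := by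
  obtain ⟨m, hm, hx⟩ := exists_trace_lift x
  obtain ⟨s, hs, hy⟩ := exists_trace_lift y
  refine ⟨m, s, z - m*s - m⁻¹*s⁻¹, hm, hs, ?_, hx, hy, by ring⟩
  rw [q_eq_unit_mul_whiteheadF m s z hm hs, ← hx, ← hy, hf, mul_zero]
end

section
/- Let f₁ = wy − xz, f₂ = wx − yz, f₃ = w, and consider points ((x,y),(z,w)) ∈ ℂ²×ℂ² with (x,y) ≠ (0,0) and (z,w) ≠ (0,0). At least two of f₁, f₂, f₃ vanish simultaneously at such a point if and only if there exist nonzero λ, μ ∈ ℂ with ((x,y),(z,w)) equal to one of (λ(1,1), μ(1,1)), (λ(1,−1), μ(−1,1)), (λ(0,1), μ(1,0)), (λ(1,0), μ(1,0)). That is, the three branch curves B₁, B₂, B₃ in ℙ¹×ℙ¹ intersect pairwise in exactly four points: B₁ ∩ B₂ = {([1:1],[1:1]), ([1:−1],[−1:1])}, B₃ ∩ B₁ = {([0:1],[1:0])}, B₃ ∩ B₂ = {([1:0],[1:0])}. -/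
theorem whitehead_branch_curves_intersections (x y z w : ℂ)
    (hxy : (x, y) ≠ (0, 0)) (hzw : (z, w) ≠ (0, 0)) :
    ((w*y - x*z = 0 ∧ w*x - y*z = 0) ∨
     (w*y - x*z = 0 ∧ w = 0) ∨
     (w*x - y*z = 0 ∧ w = 0)) ↔
      ∃ l μ : ℂ, l ≠ 0 ∧ μ ≠ 0 ∧
        (((x, y) = (l, l) ∧ (z, w) = (μ, μ)) ∨
         ((x, y) = (l, -l) ∧ (z, w) = (-μ, μ)) ∨
         ((x, y) = (0, l) ∧ (z, w) = (μ, 0)) ∨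
         ((x, y) = (l, 0) ∧ (z, w) = (μ, 0))) := by
  have hxy' : x ≠ 0 ∨ y ≠ 0 := by
    by_contra h
    push_neg at h
    exact hxy (by simp [h.1, h.2])
  have hzw' : z ≠ 0 ∨ w ≠ 0 := by
    by_contra h
    push_neg at h
    exact hzw (by simp [h.1, h.2])
  constructor
  · rintro (⟨h1, h2⟩ | ⟨h1, h3⟩ | ⟨h2, h3⟩)
    · -- main case: both f₁ and f₂ vanish
      have hw : w ≠ 0 := by
        rintro rfl
        simp only [zero_mul, zero_sub, neg_eq_zero, mul_eq_zero] at h1 h2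
        have hz : z ≠ 0 := by rcases hzw' with h | h; exact h; exact absurd rfl h
        rcases h1 with hx | hz'; swap; exact hz hz'
        rcases h2 with hy | hz'; swap; exact hz hz'
        rcases hxy' with h | h <;> [exact h hx; exact h hy]
      have hz : z ≠ 0 := by
        rintro rfl
        simp only [mul_zero, sub_zero, mul_eq_zero] at h1 h2
        rcases h1 with hw' | hy; exact hw hw'
        rcases h2 with hw' | hx; exact hw hw'
        rcases hxy' with h | h <;> [exact h hx; exact h hy]
      have e1 : (x + y) * (w - z) = 0 := by linear_combination h1 + h2
      have e2 : (x - y) * (w + z) = 0 := by linear_combination h2 - h1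
      rcases mul_eq_zero.mp e1 with hA | hA
      · rcases mul_eq_zero.mp e2 with hB | hB
        · exfalso
          have hx : x = 0 := by linear_combination (hA + hB) / 2
          have hy : y = 0 := by linear_combination (hA - hB) / 2
          rcases hxy' with h | h <;> [exact h hx; exact h hy]
        · -- x + y = 0, w + z = 0
          have hx : x ≠ 0 := by
            rintro rfl
            have : y = 0 := by linear_combination hA
            rcases hxy' with h | h <;> [exact h rfl; exact h this]
          refine ⟨x, w, hx, hw, Or.inr (Or.inl ⟨?_, ?_⟩)⟩
          · have : y = -x := by linear_combination hA
            simp [this]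
          · have : z = -w := by linear_combination hB
            simp [this]
      · rcases mul_eq_zero.mp e2 with hB | hB
        · -- w - z = 0, x - y = 0
          have hx : x ≠ 0 := by
            rintro rfl
            have : y = 0 := by linear_combination -hB
            rcases hxy' with h | h <;> [exact h rfl; exact h this]
          refine ⟨x, w, hx, hw, Or.inl ⟨?_, ?_⟩⟩
          · have : y = x := by linear_combination -hB
            simp [this]
          · have : z = w := by linear_combination -hA
            simp [this]
        · exfalso
          have : w = 0 := by linear_combination (hA + hB) / 2
          exact hw this
    · -- f₁ and f₃
      subst h3
      simp only [zero_mul, zero_sub, neg_eq_zero, mul_eq_zero] at h1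
      have hz : z ≠ 0 := by rcases hzw' with h | h; exact h; exact absurd rfl h
      rcases h1 with hx | hz'; swap; exact absurd hz' hz
      have hy : y ≠ 0 := by
        rcases hxy' with h | h; exact absurd hx h; exact h
      exact ⟨y, z, hy, hz, Or.inr (Or.inr (Or.inl ⟨by simp [hx], by simp⟩))⟩
    · -- f₂ and f₃
      subst h3
      simp only [zero_mul, zero_sub, neg_eq_zero, mul_eq_zero] at h2
      have hz : z ≠ 0 := by rcases hzw' with h | h; exact h; exact absurd rfl h
      rcases h2 with hy | hz'; swap; exact absurd hz' hz
      have hx : x ≠ 0 := by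
        rcases hxy' with h | h; exact h; exact absurd hy h
      exact ⟨x, z, hx, hz, Or.inr (Or.inr (Or.inr ⟨by simp [hy], by simp⟩))⟩
  · rintro ⟨l, μ, hl, hμ, (⟨h1, h2⟩ | ⟨h1, h2⟩ | ⟨h1, h2⟩ | ⟨h1, h2⟩)⟩ <;>
      simp only [Prod.mk.injEq] at h1 h2 <;>
      obtain ⟨rfl, rfl⟩ := h1 <;> obtain ⟨rfl, rfl⟩ := h2
    · exact Or.inl ⟨by ring, by ring⟩
    · exact Or.inl ⟨by ring, by ring⟩
    · exact Or.inr (Or.inl ⟨by ring, rfl⟩)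
    · exact Or.inr (Or.inr ⟨by ring, rfl⟩)
end
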